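/- Define q(z,h) = cos(h·√(1−z²))·z on [−1,1] for fixed h > 0, h not an odd multiple of π/2. All zeros of q(·,h) in (−1,1) are simple (the derivative ∂q/∂z is nonzero there), and hence q changes sign at each of them. Consequently, for any m ≥ 1 and h in the open interval ((2m−1)π/2, (2m+1)π/2), there exists ε > 0 such that for every z₀ with |z₀| < ε, the equation z₀ = q(z,h) has at least 2m+1 solutions z ∈ [−1,1]. -/

import Mathlib

/-!
Off `z = ±1` the map `q(·,h)` is real analytic, and it is the identity outside `(-1, 1)`, so its
level sets `q(·,h) = z₀` with `|z₀| < 1` are finite. Substituting `z = √(1 - (φ/h)²)` gives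
`q z h = cos φ · z`. For `θ` strictly between `(m - 1/2)π` and `h`, the points
`node h θ i = √(1 - ((θ - iπ)/h)²)`, `i = 0, …, m`, increase in `(0, 1]` and `q` takes the values
`(-1)ⁱ cos θ · node h θ i` there. Together with their mirror images under the odd map `q(·,h)`
these are `2m + 2` points at which `q - z₀` alternates in sign as soon as
`|z₀| < |cos θ| · node h θ 0`, and the intermediate value theorem gives `2m + 1` solutions.
At a zero `z ≠ 0` of `q` the cosine factor vanishes, so the derivative is
`h z² / √(1 - z²) · sin(h √(1 - z²)) ≠ 0`; at `z = 0` it is `cos h ≠ 0`.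
-/

open Real

/-- The scalar equation of the GIE method on the sphere. -/
noncomputable def q (z h : ℝ) : ℝ := Real.cos (h * Real.sqrt (1 - z ^ 2)) * z

open Filter Set

lemma q_neg (z h : ℝ) : q (-z) h = -q z h := by
  simp [q]

lemma continuous_q (h : ℝ) : Continuous (q · h) := by
  unfold q; fun_prop

lemma hasDerivAt_q {h z : ℝ} (hz : z ∈ Ioo (-1 : ℝ) 1) :
    HasDerivAt (q · h)
      (cos (h * √(1 - z ^ 2)) + h * z ^ 2 / √(1 - z ^ 2) * sin (h * √(1 - z ^ 2))) z := by
  have hpos : 0 < 1 - z ^ 2 := by nlinarith [hz.1, hz.2]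
  have hsqrt := (((hasDerivAt_pow 2 z).const_sub 1).sqrt hpos.ne').const_mul h
  refine (hsqrt.cos.mul (hasDerivAt_id' z)).congr_deriv ?_
  field_simp
  ring

lemma cos_ne_zero_of_pos_of_ne_odd_mul_pi_div_two {h : ℝ} (hh : 0 < h)
    (hodd : ∀ j : ℕ, h ≠ (2 * (j : ℝ) + 1) * π / 2) : cos h ≠ 0 := by
  rw [Ne, cos_eq_zero_iff]
  rintro ⟨k, rfl⟩
  have hk : (-1 : ℝ) < k := by nlinarith [pi_pos]
  lift k to ℕ using by exact_mod_cast hk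
  exact hodd k (by norm_cast)

lemma deriv_q_ne_zero {h z : ℝ} (hh : 0 < h) (hcos : cos h ≠ 0) (hz : z ∈ Ioo (-1 : ℝ) 1)
    (hq : q z h = 0) : deriv (q · h) z ≠ 0 := by
  rw [(hasDerivAt_q hz).deriv]
  rcases mul_eq_zero.1 hq with hc | rfl
  · have hz0 : z ≠ 0 := by rintro rfl; simp_all
    have hsin : sin (h * √(1 - z ^ 2)) ≠ 0 := fun hs => by
      have := sin_sq_add_cos_sq (h * √(1 - z ^ 2))
      rw [hs, hc] at this
      norm_num at this
    have hsqrt : 0 < √(1 - z ^ 2) := sqrt_pos.2 (by nlinarith [hz.1, hz.2])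
    rw [hc, zero_add]
    exact mul_ne_zero (by positivity) hsin
  · simpa using hcos

lemma analyticAt_q {h z : ℝ} (hz : z ∈ Ioo (-1 : ℝ) 1) : AnalyticAt ℝ (q · h) z := by
  have hne : 1 - z ^ 2 ≠ 0 := by nlinarith [hz.1, hz.2]
  apply ContDiffAt.analyticAt
  unfold q
  fun_prop (disch := exact hne)

lemma q_preimage_subset_Ioo {h c : ℝ} (hc : |c| < 1) : (q · h) ⁻¹' {c} ⊆ Ioo (-1) 1 := by
  intro z (hz : q z h = c)
  by_contra hout
  rw [mem_Ioo, ← abs_lt, not_lt] at hout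
  -- `√` of a negative number is `0`, so `q` is the identity off `(-1, 1)`
  have hq : q z h = z := by
    simp [q, sqrt_eq_zero'.2 (by nlinarith [sq_abs z] : 1 - z ^ 2 ≤ 0)]
  rw [← hz, hq] at hc
  linarith

lemma finite_q_preimage {h c : ℝ} (hc : |c| < 1) : ((q · h) ⁻¹' {c}).Finite := by
  have hsub := q_preimage_subset_Ioo (h := h) hc
  have hclosed : IsClosed ((q · h) ⁻¹' {c}) := isClosed_singleton.preimage (continuous_q h)
  have hanalytic : AnalyticOnNhd ℝ (q · h) (Ioo (-1) 1) := fun z hz => analyticAt_q hz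
  rcases hanalytic.eqOn_or_eventually_ne_of_preconnected analyticOnNhd_const isPreconnected_Ioo
    with hconst | hne
  · have h1 : q 1 h = c := by
      have : Icc (-1 : ℝ) 1 ⊆ (q · h) ⁻¹' {c} := by
        rw [← closure_Ioo (by norm_num)]
        exact closure_minimal (fun z hz => hconst hz) hclosed
      exact this ⟨by norm_num, le_rfl⟩
    simp [q, ← h1] at hc
  · have hcpt : IsCompact ((q · h) ⁻¹' {c}) :=
      isCompact_Icc.of_isClosed_subset hclosed (hsub.trans Ioo_subset_Icc_self)
    exact (hcpt.finite_sdiff_of_mem_codiscreteWithin (codiscreteWithin_mono hsub hne)).subset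
      fun z hz => ⟨hz, not_not.2 hz⟩

lemma div_sq_le_one_of_abs_le {φ h : ℝ} (hh : 0 < h) (hφ : |φ| ≤ h) : (φ / h) ^ 2 ≤ 1 :=
  (sq_le_one_iff_abs_le_one _).2 (by rwa [abs_div, abs_of_pos hh, div_le_one hh])

lemma q_sqrt_one_sub_div_sq {h φ : ℝ} (hh : 0 < h) (hφ : |φ| ≤ h) :
    q (√(1 - (φ / h) ^ 2)) h = cos φ * √(1 - (φ / h) ^ 2) := by
  rw [q, sq_sqrt (sub_nonneg.2 (div_sq_le_one_of_abs_le hh hφ)), sub_sub_cancel, sqrt_sq_eq_abs,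
    abs_div, abs_of_pos hh, mul_div_cancel₀ _ hh.ne', cos_abs]

section SignChanges

variable {f : ℝ → ℝ} {c : ℝ}

lemma exists_mem_Ioo_eq_of_mul_neg {a b : ℝ} (hf : ContinuousOn f (Icc a b)) (hab : a ≤ b)
    (hsign : f a * f b < 0) (ha : |c| < |f a|) (hb : |c| < |f b|) : ∃ x ∈ Ioo a b, f x = c := by
  have hc_lo := neg_abs_le c
  have hc_hi := le_abs_self c
  rcases mul_neg_iff.1 hsign with ⟨ha0, hb0⟩ | ⟨ha0, hb0⟩
  · rw [abs_of_pos ha0] at ha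
    rw [abs_of_neg hb0] at hb
    exact intermediate_value_Ioo' hab hf ⟨by linarith, by linarith⟩
  · rw [abs_of_neg ha0] at ha
    rw [abs_of_pos hb0] at hb
    exact intermediate_value_Ioo hab hf ⟨by linarith, by linarith⟩

lemma ncard_Ioo_inter_preimage_add_le (hfin : (f ⁻¹' {c}).Finite) {a b d : ℝ} (hab : a ≤ b)
    (hbd : b ≤ d) :
    (Ioo a b ∩ f ⁻¹' {c}).ncard + (Ioo b d ∩ f ⁻¹' {c}).ncard ≤ (Ioo a d ∩ f ⁻¹' {c}).ncard := by
  have hdisj : Disjoint (Ioo a b ∩ f ⁻¹' {c}) (Ioo b d ∩ f ⁻¹' {c}) :=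
    disjoint_left.2 fun x hx hx' => (hx.1.2.trans hx'.1.1).false
  rw [← ncard_union_eq hdisj (hfin.subset inter_subset_right) (hfin.subset inter_subset_right)]
  refine ncard_le_ncard ?_ (hfin.subset inter_subset_right)
  exact union_subset (inter_subset_inter_left _ (Ioo_subset_Ioo_right hbd))
    (inter_subset_inter_left _ (Ioo_subset_Ioo_left hab))

lemma le_ncard_Ioo_inter_preimage_of_alternating (hf : Continuous f) (hfin : (f ⁻¹' {c}).Finite)
    {t : ℕ → ℝ} {n : ℕ} (hmono : StrictMonoOn t (Iic n))
    (halt : ∀ i < n, f (t i) * f (t (i + 1)) < 0) (hc : ∀ i ≤ n, |c| < |f (t i)|) :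
    n ≤ (Ioo (t 0) (t n) ∩ f ⁻¹' {c}).ncard := by
  induction n with
  | zero => exact Nat.zero_le _
  | succ n ih =>
    have hlt : t n < t (n + 1) := hmono (mem_Iic.2 n.le_succ) (mem_Iic.2 le_rfl) n.lt_succ_self
    obtain ⟨x, hx, hfx⟩ := exists_mem_Ioo_eq_of_mul_neg hf.continuousOn hlt.le
      (halt n n.lt_succ_self) (hc n n.le_succ) (hc (n + 1) le_rfl)
    have hlast : 1 ≤ (Ioo (t n) (t (n + 1)) ∩ f ⁻¹' {c}).ncard :=
      (ncard_pos (hfin.subset inter_subset_right)).2 ⟨x, hx, hfx⟩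
    have hprev := ih (hmono.mono (Iic_subset_Iic.2 n.le_succ))
      (fun i hi => halt i (hi.trans n.lt_succ_self)) (fun i hi => hc i (hi.trans n.le_succ))
    have h0n : t 0 ≤ t n :=
      hmono.monotoneOn (mem_Iic.2 (Nat.zero_le _)) (mem_Iic.2 n.le_succ) (Nat.zero_le n)
    linarith [ncard_Ioo_inter_preimage_add_le hfin h0n hlt.le]

lemma two_mul_add_one_le_ncard_Ioo_inter_preimage_of_odd (hf : Continuous f)
    (hodd : ∀ x, f (-x) = -f x) (hfin : (f ⁻¹' {c}).Finite) {t : ℕ → ℝ} {n : ℕ} (ht0 : 0 < t 0)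
    (hmono : StrictMonoOn t (Iic n)) (halt : ∀ i < n, f (t i) * f (t (i + 1)) < 0)
    (hc : ∀ i ≤ n, |c| < |f (t i)|) :
    2 * n + 1 ≤ (Ioo (-t n) (t n) ∩ f ⁻¹' {c}).ncard := by
  have hneg_preimage : f ⁻¹' {-c} = Neg.neg ⁻¹' (f ⁻¹' {c}) := by
    ext x; simp [hodd, neg_eq_iff_eq_neg]
  have hreflect : Ioo (-t n) (-t 0) ∩ f ⁻¹' {c} = Neg.neg ⁻¹' (Ioo (t 0) (t n) ∩ f ⁻¹' {-c}) := by
    ext x; simp [hodd, neg_lt, lt_neg, and_comm]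
  have hfin' : (f ⁻¹' {-c}).Finite := hneg_preimage ▸ hfin.preimage neg_injective.injOn
  have hneg : n ≤ (Ioo (-t n) (-t 0) ∩ f ⁻¹' {c}).ncard := by
    rw [hreflect, ncard_preimage_of_injective_subset_range neg_injective (by simp)]
    exact le_ncard_Ioo_inter_preimage_of_alternating hf hfin' hmono halt (by simpa using hc)
  have hpos := le_ncard_Ioo_inter_preimage_of_alternating hf hfin hmono halt hc
  have hmid : 1 ≤ (Ioo (-t 0) (t 0) ∩ f ⁻¹' {c}).ncard := by
    have hc0 := hc 0 (Nat.zero_le n)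
    have hsign : f (-t 0) * f (t 0) < 0 := by
      rw [hodd, neg_mul, neg_lt_zero, ← sq]
      exact sq_pos_of_ne_zero (abs_pos.1 ((abs_nonneg c).trans_lt hc0))
    obtain ⟨x, hx, hfx⟩ := exists_mem_Ioo_eq_of_mul_neg hf.continuousOn (by linarith) hsign
      (by rwa [hodd, abs_neg]) hc0
    exact (ncard_pos (hfin.subset inter_subset_right)).2 ⟨x, hx, hfx⟩
  have h0n : t 0 ≤ t n :=
    hmono.monotoneOn (mem_Iic.2 (Nat.zero_le _)) (mem_Iic.2 le_rfl) (Nat.zero_le n)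
  linarith [ncard_Ioo_inter_preimage_add_le hfin (neg_le_neg h0n) (by linarith : -t 0 ≤ t 0),
    ncard_Ioo_inter_preimage_add_le hfin (by linarith : -t n ≤ t 0) h0n]

end SignChanges

noncomputable def node (h θ : ℝ) (i : ℕ) : ℝ := √(1 - ((θ - i * π) / h) ^ 2)

lemma node_le_one (h θ : ℝ) (i : ℕ) : node h θ i ≤ 1 :=
  sqrt_le_one.2 (by nlinarith [sq_nonneg ((θ - i * π) / h)])

lemma node_zero_pos {h θ : ℝ} (hθ : 0 < θ) (hθh : θ < h) : 0 < node h θ 0 := by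
  refine sqrt_pos.2 (sub_pos.2 ((sq_lt_one_iff_abs_lt_one _).2 ?_))
  rw [Nat.cast_zero, zero_mul, sub_zero, abs_div, abs_of_pos (hθ.trans hθh),
    div_lt_one (hθ.trans hθh), abs_of_pos hθ]
  exact hθh

lemma abs_sub_nat_mul_pi_le {h θ : ℝ} {m i : ℕ} (hm : 1 ≤ m) (hθm : (2 * m - 1) * π / 2 < θ)
    (hθh : θ < h) (hi : i ≤ m) : |θ - i * π| ≤ h := by
  have hm' : (1 : ℝ) ≤ m := by exact_mod_cast hm
  have hiπ : (i : ℝ) * π ≤ m * π := by gcongr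
  rw [abs_le]
  constructor <;> nlinarith [pi_pos]

lemma q_node {h θ : ℝ} {m i : ℕ} (hh : 0 < h) (hm : 1 ≤ m) (hθm : (2 * m - 1) * π / 2 < θ)
    (hθh : θ < h) (hi : i ≤ m) : q (node h θ i) h = (-1) ^ i * cos θ * node h θ i := by
  rw [node, q_sqrt_one_sub_div_sq hh (abs_sub_nat_mul_pi_le hm hθm hθh hi), cos_sub_nat_mul_pi]

lemma strictMonoOn_node {h θ : ℝ} {m : ℕ} (hh : 0 < h) (hm : 1 ≤ m)
    (hθm : (2 * m - 1) * π / 2 < θ) (hθh : θ < h) : StrictMonoOn (node h θ) (Iic m) := by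
  refine strictMonoOn_Iic_of_lt_succ fun i hi => ?_
  have hiπ : (i : ℝ) * π + π ≤ m * π := by
    have : (i : ℝ) + 1 ≤ m := by exact_mod_cast hi
    nlinarith [pi_pos]
  -- `θ - iπ > π/2`, so subtracting `π` decreases `|θ - iπ|`
  have hsq : (θ - (i + 1) * π) ^ 2 < (θ - i * π) ^ 2 := by
    nlinarith [mul_pos pi_pos (by linarith : 0 < 2 * (θ - i * π) - π)]
  rw [node, node, Order.succ_eq_add_one, Nat.cast_add_one, div_pow, div_pow]
  refine sqrt_lt_sqrt ?_ (sub_lt_sub_left (div_lt_div_of_pos_right hsq (by positivity)) 1)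
  rw [← div_pow]
  exact sub_nonneg.2 (div_sq_le_one_of_abs_le hh (abs_sub_nat_mul_pi_le hm hθm hθh hi.le))

theorem exists_pos_two_mul_add_one_le_ncard_q_eq {h : ℝ} {m : ℕ} (hm : 1 ≤ m)
    (hmh : h ∈ Ioo ((2 * (m : ℝ) - 1) * π / 2) ((2 * (m : ℝ) + 1) * π / 2)) :
    ∃ ε > 0, ∀ z₀ : ℝ, |z₀| < ε → 2 * m + 1 ≤ {z ∈ Icc (-1 : ℝ) 1 | q z h = z₀}.ncard := by
  obtain ⟨hlo, hhi⟩ := hmh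
  have hm' : (1 : ℝ) ≤ m := by exact_mod_cast hm
  have hπ := pi_pos
  set θ := ((2 * m - 1) * π / 2 + h) / 2 with hθ
  have hθm : (2 * m - 1) * π / 2 < θ := by linarith
  have hθh : θ < h := by linarith
  have hh : 0 < h := by nlinarith
  have hcos : cos θ ≠ 0 := by
    have hpos : 0 < cos (θ - m * π) := cos_pos_of_mem_Ioo ⟨by nlinarith, by nlinarith⟩
    rw [cos_sub_nat_mul_pi] at hpos
    exact right_ne_zero_of_mul hpos.ne'
  have ht0 : 0 < node h θ 0 := node_zero_pos (by nlinarith) hθh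
  have hmono := strictMonoOn_node hh hm hθm hθh
  have hle : ∀ i ≤ m, node h θ 0 ≤ node h θ i := fun i hi =>
    hmono.monotoneOn (mem_Iic.2 (Nat.zero_le m)) (mem_Iic.2 hi) (Nat.zero_le i)
  have halt : ∀ i < m, q (node h θ i) h * q (node h θ (i + 1)) h < 0 := by
    intro i hi
    have hsign : ((-1 : ℝ) ^ i) ^ 2 = 1 := by
      rw [← pow_mul, mul_comm, pow_mul, neg_one_sq, one_pow]
    have hprod := mul_pos (ht0.trans_le (hle i hi.le)) (ht0.trans_le (hle (i + 1) hi))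
    calc q (node h θ i) h * q (node h θ (i + 1)) h
        = -(((-1 : ℝ) ^ i) ^ 2 * (cos θ ^ 2 * (node h θ i * node h θ (i + 1)))) := by
          rw [q_node hh hm hθm hθh hi.le, q_node hh hm hθm hθh (i := i + 1) hi]; ring
      _ < 0 := by
          rw [hsign, one_mul, neg_lt_zero]
          exact mul_pos (sq_pos_of_ne_zero hcos) hprod
  refine ⟨|cos θ| * node h θ 0, by positivity, fun z₀ hz₀ => ?_⟩
  have habs : ∀ i ≤ m, |z₀| < |q (node h θ i) h| := by
    intro i hi
    rw [q_node hh hm hθm hθh hi, abs_mul, abs_mul, abs_pow, abs_neg, abs_one, one_pow, one_mul,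
      abs_of_pos (ht0.trans_le (hle i hi))]
    exact hz₀.trans_le (mul_le_mul_of_nonneg_left (hle i hi) (abs_nonneg _))
  have hz₀1 : |z₀| < 1 :=
    hz₀.trans_le (mul_le_one₀ (abs_cos_le_one θ) ht0.le (node_le_one h θ 0))
  have hfin := finite_q_preimage (h := h) hz₀1
  calc 2 * m + 1 ≤ (Ioo (-node h θ m) (node h θ m) ∩ (q · h) ⁻¹' {z₀}).ncard :=
        two_mul_add_one_le_ncard_Ioo_inter_preimage_of_odd (continuous_q h) (q_neg · h) hfin
          ht0 hmono halt habs
    _ ≤ _ := by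
      have := node_le_one h θ m
      refine ncard_le_ncard (fun z hz => ⟨⟨by linarith [hz.1.1], by linarith [hz.1.2]⟩, hz.2⟩) ?_
      exact hfin.subset fun z hz => hz.2

/-- If `h > 0` is not an odd multiple of `π/2`, then all zeros of `q(·,h)` in `(−1,1)` are
simple, and for `m ≥ 1` and `h ∈ ((2m−1)π/2, (2m+1)π/2)` there is `ε > 0` such that every
`z₀` with `|z₀| < ε` has at least `2m+1` preimages in `[−1,1]` under `q(·,h)`. -/
theorem stmt_11 (h : ℝ) (hh : 0 < h) (hodd : ∀ j : ℕ, h ≠ (2 * (j : ℝ) + 1) * π / 2) :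
    (∀ z ∈ Set.Ioo (-1 : ℝ) 1, q z h = 0 → deriv (fun w => q w h) z ≠ 0) ∧
    (∀ m : ℕ, 1 ≤ m →
      h ∈ Set.Ioo ((2 * (m : ℝ) - 1) * π / 2) ((2 * (m : ℝ) + 1) * π / 2) →
      ∃ ε > 0, ∀ z₀ : ℝ, |z₀| < ε →
        2 * m + 1 ≤ {z ∈ Set.Icc (-1 : ℝ) 1 | q z h = z₀}.ncard) := by
  have hcos := cos_ne_zero_of_pos_of_ne_odd_mul_pi_div_two hh hodd
  exact ⟨fun z hz hq => deriv_q_ne_zero hh hcos hz hq,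
    fun m hm hmh => exists_pos_two_mul_add_one_le_ncard_q_eq hm hmh⟩
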